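/- Let α ≥ 1 be an ordinal and λ a limit ordinal. Then the λ-fold iterated Hessenberg product of α equals the ordinal power α^λ, i.e. α^{⊙λ} = α^λ. Moreover α^λ is additively closed: for all ordinals γ, δ < α^λ one has γ + δ < α^λ. -/

import Mathlib

/-!
Ordinal multiplication is dominated by natural multiplication, which gives `α ^ β ≤ α^{⊙β}` for
every `β`. For the converse at a limit `λ = ω * Q`, one has `α ^ ω = ω ^ ω ^ k` with
`log ω α < ω ^ k`, hence `α ^ λ = ω ^ (ω ^ k * Q)`. Natural sums are computed digitwise in base
`ω ^ k`, so adding `log ω α` naturally to an exponent below `ω ^ k * Q` keeps it below, and since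
`ω ^ a ⨳ ω ^ b ≤ ω ^ (a ♯ b)`, natural multiplication by `α` does not leave `α ^ λ`. An induction
then gives `α^{⊙β} < α ^ λ` for all `β < λ`. Being a power of `ω`, `α ^ λ` is additively closed.
-/

universe u

namespace Ordinal
/-- Natural (Hessenberg) sum, as in the older Mathlib (removed since). -/
noncomputable def nadd : Ordinal.{u} → Ordinal.{u} → Ordinal.{u}
  | a, b =>
    max (⨆ x : Set.Iio a, Order.succ (nadd x.1 b)) (⨆ x : Set.Iio b, Order.succ (nadd a x.1))
termination_by a b => (a, b)
decreasing_by all_goals cases x; decreasing_tactic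
/-- Natural (Hessenberg) product, as in the older Mathlib (removed since). -/
noncomputable def nmul : Ordinal.{u} → Ordinal.{u} → Ordinal.{u}
  | a, b => sInf {c | ∀ a' < a, ∀ b' < b,
      nadd (nmul a' b) (nmul a b') < nadd c (nmul a' b')}
termination_by a b => (a, b)
end Ordinal

/-- The `β`-fold iterated Hessenberg (natural) product of `α`:
`α^{⊙0} = 1`, `α^{⊙(β+1)} = α^{⊙β} ⊙ α`, and
`α^{⊙λ} = sup_{β<λ} α^{⊙β}` for `λ` a limit ordinal. -/
noncomputable def iterNmul (α β : Ordinal) : Ordinal :=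
  Ordinal.limitRecOn β 1 (fun _ ih => Ordinal.nmul ih α)
    (fun b _ ih => ⨆ γ : Set.Iio b, ih γ.1 γ.2)

open Order

infixl:65 " ♯ " => Ordinal.nadd
infixl:70 " ⨳ " => Ordinal.nmul

namespace Ordinal

variable {a b c d r s x y P α l : Ordinal.{u}}

theorem nadd_def (a b : Ordinal.{u}) : a ♯ b =
    max (⨆ x : Set.Iio a, succ (x.1 ♯ b)) (⨆ x : Set.Iio b, succ (a ♯ x.1)) := by
  rw [nadd]

theorem lt_nadd_iff : a < b ♯ c ↔ (∃ b' < b, a ≤ b' ♯ c) ∨ ∃ c' < c, a ≤ b ♯ c' := by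
  rw [nadd_def]
  simp

theorem nadd_le_iff : b ♯ c ≤ a ↔ (∀ b' < b, b' ♯ c < a) ∧ ∀ c' < c, b ♯ c' < a := by
  rw [← not_lt, lt_nadd_iff]
  simp only [not_or, not_exists, not_and, not_le]

theorem nadd_lt_nadd_left (h : b < c) (a : Ordinal.{u}) : a ♯ b < a ♯ c :=
  lt_nadd_iff.2 (Or.inr ⟨b, h, le_rfl⟩)

theorem nadd_lt_nadd_right (h : b < c) (a : Ordinal.{u}) : b ♯ a < c ♯ a :=
  lt_nadd_iff.2 (Or.inl ⟨b, h, le_rfl⟩)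

theorem nadd_le_nadd_left (h : b ≤ c) (a : Ordinal.{u}) : a ♯ b ≤ a ♯ c := by
  rcases h.lt_or_eq with h | rfl
  exacts [(nadd_lt_nadd_left h a).le, le_rfl]

theorem nadd_le_nadd_right (h : b ≤ c) (a : Ordinal.{u}) : b ♯ a ≤ c ♯ a := by
  rcases h.lt_or_eq with h | rfl
  exacts [(nadd_lt_nadd_right h a).le, le_rfl]

theorem nadd_le_nadd (h₁ : a ≤ b) (h₂ : c ≤ d) : a ♯ c ≤ b ♯ d :=
  (nadd_le_nadd_right h₁ c).trans (nadd_le_nadd_left h₂ b)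

theorem nadd_lt_nadd_of_lt_of_le (h₁ : a < b) (h₂ : c ≤ d) : a ♯ c < b ♯ d :=
  (nadd_lt_nadd_right h₁ c).trans_le (nadd_le_nadd_left h₂ b)

theorem nadd_lt_nadd_of_le_of_lt (h₁ : a ≤ b) (h₂ : c < d) : a ♯ c < b ♯ d :=
  (nadd_le_nadd_right h₁ c).trans_lt (nadd_lt_nadd_left h₂ b)

theorem nadd_lt_nadd_iff_right : b ♯ a < c ♯ a ↔ b < c :=
  StrictMono.lt_iff_lt (f := (· ♯ a)) fun _ _ h => nadd_lt_nadd_right h a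

theorem nadd_comm (a b : Ordinal.{u}) : a ♯ b = b ♯ a := by
  induction a using WellFoundedLT.induction generalizing b with
  | _ a iha =>
  induction b using WellFoundedLT.induction with
  | _ b ihb =>
  rw [nadd_def a b, nadd_def b a, max_comm]
  congr 1
  · congr 1
    funext x
    rw [ihb x.1 x.2]
  · congr 1
    funext x
    rw [iha x.1 x.2 b]

@[simp]
theorem nadd_zero (a : Ordinal.{u}) : a ♯ 0 = a := by
  induction a using WellFoundedLT.induction with
  | _ a ih =>
  refine le_antisymm ?_ (le_of_forall_lt fun t ht => ?_)
  · rw [nadd_le_iff]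
    refine ⟨fun b hb => ?_, fun c hc => absurd hc (not_lt.2 zero_le)⟩
    rwa [ih b hb]
  · calc t = t ♯ 0 := (ih t ht).symm
      _ < a ♯ 0 := nadd_lt_nadd_right ht 0

@[simp]
theorem zero_nadd (a : Ordinal.{u}) : 0 ♯ a = a := by
  rw [nadd_comm, nadd_zero]

theorem le_self_nadd : a ≤ a ♯ b :=
  (nadd_zero a).symm.trans_le (nadd_le_nadd_left zero_le a)

theorem nadd_succ (a b : Ordinal.{u}) : a ♯ succ b = succ (a ♯ b) := by
  induction a using WellFoundedLT.induction with
  | _ a ih =>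
  refine le_antisymm ?_ (succ_le_of_lt (nadd_lt_nadd_left (lt_succ b) a))
  rw [nadd_le_iff]
  refine ⟨fun a' ha' => ?_, fun c hc => ?_⟩
  · rw [ih a' ha', succ_lt_succ_iff]
    exact nadd_lt_nadd_right ha' b
  · exact lt_succ_iff.2 (nadd_le_nadd_left (lt_succ_iff.1 hc) a)

theorem nadd_natCast (a : Ordinal.{u}) (n : ℕ) : a ♯ n = a + n := by
  induction n with
  | zero => simp
  | succ n ih =>
    rw [Nat.cast_succ, ← add_assoc, ← ih, ← succ_eq_add_one, ← succ_eq_add_one, nadd_succ]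

theorem nadd_assoc (a b c : Ordinal.{u}) : a ♯ b ♯ c = a ♯ (b ♯ c) := by
  induction a using WellFoundedLT.induction generalizing b c with
  | _ a iha =>
  induction b using WellFoundedLT.induction generalizing c with
  | _ b ihb =>
  induction c using WellFoundedLT.induction with
  | _ c ihc =>
  apply le_antisymm
  · rw [nadd_le_iff]
    refine ⟨fun x hx => ?_, fun c' hc' => ?_⟩
    · rcases lt_nadd_iff.1 hx with ⟨a', ha', hx'⟩ | ⟨b', hb', hx'⟩
      · calc x ♯ c ≤ a' ♯ b ♯ c := nadd_le_nadd_right hx' c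
          _ = a' ♯ (b ♯ c) := iha a' ha' b c
          _ < a ♯ (b ♯ c) := nadd_lt_nadd_right ha' _
      · calc x ♯ c ≤ a ♯ b' ♯ c := nadd_le_nadd_right hx' c
          _ = a ♯ (b' ♯ c) := ihb b' hb' c
          _ < a ♯ (b ♯ c) := nadd_lt_nadd_left (nadd_lt_nadd_right hb' c) a
    · rw [ihc c' hc']
      exact nadd_lt_nadd_left (nadd_lt_nadd_left hc' b) a
  · rw [nadd_le_iff]
    refine ⟨fun a' ha' => ?_, fun y hy => ?_⟩
    · rw [← iha a' ha' b c]
      exact nadd_lt_nadd_right (nadd_lt_nadd_right ha' b) c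
    · rcases lt_nadd_iff.1 hy with ⟨b', hb', hy'⟩ | ⟨c', hc', hy'⟩
      · calc a ♯ y ≤ a ♯ (b' ♯ c) := nadd_le_nadd_left hy' a
          _ = a ♯ b' ♯ c := (ihb b' hb' c).symm
          _ < a ♯ b ♯ c := nadd_lt_nadd_right (nadd_lt_nadd_left hb' a) c
      · calc a ♯ y ≤ a ♯ (b ♯ c') := nadd_le_nadd_left hy' a
          _ = a ♯ b ♯ c' := (ihc c' hc').symm
          _ < a ♯ b ♯ c := nadd_lt_nadd_left hc' _

instance : Std.Associative Ordinal.nadd := ⟨nadd_assoc⟩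

instance : Std.Commutative Ordinal.nadd := ⟨nadd_comm⟩

theorem lt_of_nadd_lt_nadd_of_eq {x y z x' y' : Ordinal.{u}} (h : x' < y') (hx : x ♯ z = x')
    (hy : y' = y ♯ z) : x < y := by
  subst hx hy
  exact nadd_lt_nadd_iff_right.1 h

theorem add_le_nadd (a b : Ordinal.{u}) : a + b ≤ a ♯ b := by
  induction b using WellFoundedLT.induction with
  | _ b ih =>
  refine le_of_forall_lt fun t ht => ?_
  rcases lt_or_ge t a with h | h
  · exact h.trans_le le_self_nadd
  · have e := Ordinal.add_sub_cancel_of_le h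
    have hs : t - a < b := by
      rw [← e] at ht
      exact lt_of_add_lt_add_left ht
    calc t = a + (t - a) := e.symm
      _ ≤ a ♯ (t - a) := ih _ hs
      _ < a ♯ b := nadd_lt_nadd_left hs a

theorem nmul_def (a b : Ordinal.{u}) :
    a ⨳ b = sInf {c | ∀ a' < a, ∀ b' < b, a' ⨳ b ♯ a ⨳ b' < c ♯ a' ⨳ b'} := by
  rw [nmul]

theorem nmul_nonempty (a b : Ordinal.{u}) :
    {c : Ordinal.{u} | ∀ a' < a, ∀ b' < b, a' ⨳ b ♯ a ⨳ b' < c ♯ a' ⨳ b'}.Nonempty := by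
  refine ⟨⨆ p : Set.Iio a × Set.Iio b, succ (p.1.1 ⨳ b ♯ a ⨳ p.2.1), fun a' ha' b' hb' => ?_⟩
  refine (lt_succ _).trans_le (le_trans ?_ le_self_nadd)
  exact Ordinal.le_iSup (fun p : Set.Iio a × Set.Iio b => succ (p.1.1 ⨳ b ♯ a ⨳ p.2.1))
    ⟨⟨a', ha'⟩, ⟨b', hb'⟩⟩

theorem nmul_nadd_lt {a' b' : Ordinal.{u}} (ha : a' < a) (hb : b' < b) :
    a' ⨳ b ♯ a ⨳ b' < a ⨳ b ♯ a' ⨳ b' := by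
  rw [nmul_def a b]
  exact csInf_mem (nmul_nonempty a b) a' ha b' hb

theorem nmul_nadd_le {a' b' : Ordinal.{u}} (ha : a' ≤ a) (hb : b' ≤ b) :
    a' ⨳ b ♯ a ⨳ b' ≤ a ⨳ b ♯ a' ⨳ b' := by
  rcases ha.lt_or_eq with ha | rfl
  · rcases hb.lt_or_eq with hb | rfl
    · exact (nmul_nadd_lt ha hb).le
    · rw [nadd_comm]
  · exact le_rfl

theorem lt_nmul_iff : c < a ⨳ b ↔ ∃ a' < a, ∃ b' < b, c ♯ a' ⨳ b' ≤ a' ⨳ b ♯ a ⨳ b' := by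
  refine ⟨fun h => ?_, fun ⟨a', ha, b', hb, h⟩ => ?_⟩
  · rw [nmul_def] at h
    simpa using notMem_of_lt_csInf h ⟨0, fun _ _ => zero_le⟩
  · exact nadd_lt_nadd_iff_right.1 (h.trans_lt (nmul_nadd_lt ha hb))

theorem nmul_le_iff : a ⨳ b ≤ c ↔ ∀ a' < a, ∀ b' < b, a' ⨳ b ♯ a ⨳ b' < c ♯ a' ⨳ b' := by
  rw [← not_iff_not]
  push Not
  exact lt_nmul_iff

theorem nmul_comm (a b : Ordinal.{u}) : a ⨳ b = b ⨳ a := by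
  induction a using WellFoundedLT.induction generalizing b with
  | _ a iha =>
  induction b using WellFoundedLT.induction with
  | _ b ihb =>
  rw [nmul_def a b, nmul_def b a]
  congr 1
  ext x
  simp only [Set.mem_ofPred_eq]
  constructor
  · intro H d hd c hc
    have := H c hc d hd
    rwa [iha c hc b, ihb d hd, iha c hc d, nadd_comm (b ⨳ c)] at this
  · intro H c hc d hd
    have := H d hd c hc
    rwa [iha c hc b, ihb d hd, iha c hc d, nadd_comm (b ⨳ c)]

@[simp]
theorem nmul_zero (a : Ordinal.{u}) : a ⨳ 0 = 0 := by
  rw [← nonpos_iff_eq_zero, nmul_le_iff]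
  exact fun _ _ b hb => absurd hb (not_lt.2 zero_le)

@[simp]
theorem zero_nmul (a : Ordinal.{u}) : 0 ⨳ a = 0 := by
  rw [nmul_comm, nmul_zero]

@[simp]
theorem nmul_one (a : Ordinal.{u}) : a ⨳ 1 = a := by
  induction a using WellFoundedLT.induction with
  | _ a ih =>
  apply le_antisymm
  · rw [nmul_le_iff]
    intro a' ha' b' hb'
    rw [lt_one_iff] at hb'
    subst hb'
    simpa only [ih a' ha', nmul_zero, nadd_zero] using ha'
  · refine le_of_forall_lt fun t ht => lt_nmul_iff.2 ⟨t, ht, 0, zero_lt_one, ?_⟩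
    simp only [ih t ht, nmul_zero, nadd_zero, le_refl]

theorem nmul_lt_nmul_of_pos_left (h₁ : a < b) (h₂ : 0 < c) : c ⨳ a < c ⨳ b :=
  lt_nmul_iff.2 ⟨0, h₂, a, h₁, by simp only [zero_nmul, nadd_zero, zero_nadd, le_refl]⟩

theorem nmul_le_nmul_left (h : a ≤ b) (c : Ordinal.{u}) : c ⨳ a ≤ c ⨳ b := by
  rcases h.lt_or_eq with h | rfl
  · rcases eq_zero_or_pos c with rfl | hc
    · simp only [zero_nmul, le_refl]
    · exact (nmul_lt_nmul_of_pos_left h hc).le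
  · exact le_rfl

theorem nmul_le_nmul_right (h : a ≤ b) (c : Ordinal.{u}) : a ⨳ c ≤ b ⨳ c := by
  rw [nmul_comm a, nmul_comm b]
  exact nmul_le_nmul_left h c

theorem nmul_le_nmul (h₁ : a ≤ b) (h₂ : c ≤ d) : a ⨳ c ≤ b ⨳ d :=
  (nmul_le_nmul_right h₁ c).trans (nmul_le_nmul_left h₂ b)

theorem nmul_nadd (a b c : Ordinal.{u}) : a ⨳ (b ♯ c) = a ⨳ b ♯ a ⨳ c := by
  induction a using WellFoundedLT.induction generalizing b c with
  | _ a iha =>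
  induction b using WellFoundedLT.induction generalizing c with
  | _ b ihb =>
  induction c using WellFoundedLT.induction with
  | _ c ihc =>
  apply le_antisymm
  · rw [nmul_le_iff]
    intro a' ha d hd
    rw [iha a' ha b c]
    rcases lt_nadd_iff.1 hd with ⟨b', hb, hd⟩ | ⟨c', hc, hd⟩
    · have := nadd_lt_nadd_of_lt_of_le (nmul_nadd_lt ha hb) (nmul_nadd_le ha.le hd)
      rw [iha a' ha b' c, ihb b' hb c] at this
      exact lt_of_nadd_lt_nadd_of_eq (z := a ⨳ b' ♯ a' ⨳ b') this (by ac_rfl) (by ac_rfl)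
    · have := nadd_lt_nadd_of_lt_of_le (nmul_nadd_lt ha hc) (nmul_nadd_le ha.le hd)
      rw [iha a' ha b c', ihc c' hc] at this
      exact lt_of_nadd_lt_nadd_of_eq (z := a ⨳ c' ♯ a' ⨳ c') this (by ac_rfl) (by ac_rfl)
  · rw [nadd_le_iff]
    constructor
    · intro d hd
      rcases lt_nmul_iff.1 hd with ⟨a', ha, b', hb, hd⟩
      have := nadd_lt_nadd_of_le_of_lt hd (nmul_nadd_lt ha (nadd_lt_nadd_right hb c))
      rw [iha a' ha b c, ihb b' hb c, iha a' ha b' c] at this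
      exact lt_of_nadd_lt_nadd_of_eq (z := a' ⨳ b' ♯ a' ⨳ b ♯ a' ⨳ c ♯ a ⨳ b') this
        (by ac_rfl) (by ac_rfl)
    · intro d hd
      rcases lt_nmul_iff.1 hd with ⟨a', ha, c', hc, hd⟩
      have := nadd_lt_nadd_of_le_of_lt hd (nmul_nadd_lt ha (nadd_lt_nadd_left hc b))
      rw [iha a' ha b c, ihc c' hc, iha a' ha b c'] at this
      exact lt_of_nadd_lt_nadd_of_eq (z := a' ⨳ c' ♯ a' ⨳ b ♯ a' ⨳ c ♯ a ⨳ c') this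
        (by ac_rfl) (by ac_rfl)

theorem nadd_nmul (a b c : Ordinal.{u}) : (a ♯ b) ⨳ c = a ⨳ c ♯ b ⨳ c := by
  rw [nmul_comm, nmul_nadd, nmul_comm c, nmul_comm c]

theorem nmul_add_one (a b : Ordinal.{u}) : a ⨳ (b + 1) = a ⨳ b ♯ a := by
  rw [← Nat.cast_one, ← nadd_natCast, nmul_nadd, Nat.cast_one, nmul_one]

theorem nmul_right_comm_natCast (a b : Ordinal.{u}) (n : ℕ) : a ⨳ n ⨳ b = a ⨳ b ⨳ n := by
  induction n with
  | zero => simp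
  | succ n ih => rw [Nat.cast_succ, nmul_add_one, nadd_nmul, ih, nmul_add_one]

theorem mul_le_nmul (a b : Ordinal.{u}) : a * b ≤ a ⨳ b := by
  induction b using WellFoundedLT.induction with
  | _ b ih =>
  rcases eq_or_ne a 0 with rfl | ha
  · simp
  refine le_of_forall_lt fun t ht => ?_
  have hq : t / a < b := (lt_mul_iff_div_lt ha).1 ht
  calc t = a * (t / a) + t % a := (div_add_mod t a).symm
    _ ≤ a ⨳ (t / a) + t % a := add_le_add_left (ih _ hq) _
    _ ≤ a ⨳ (t / a) ♯ t % a := add_le_nadd _ _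
    _ < a ⨳ (t / a) ♯ a := nadd_lt_nadd_left (mod_lt t ha) _
    _ = a ⨳ (t / a + 1) := (nmul_add_one a _).symm
    _ ≤ a ⨳ b := nmul_le_nmul_left (add_one_le_of_lt hq) a

theorem le_mul_div_nadd_mod (x P : Ordinal.{u}) : x ≤ P * (x / P) ♯ x % P :=
  (div_add_mod x P).symm.trans_le (add_le_nadd _ _)

theorem IsPrincipal.nmul_natCast_lt (hP : IsPrincipal (· ♯ ·) P) (hx : x < P) (n : ℕ) :
    x ⨳ n < P := by
  induction n with
  | zero => simpa using pos_of_gt hx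
  | succ n ih =>
    rw [Nat.cast_succ, nmul_add_one]
    exact hP ih hx

theorem mul_nadd_eq_mul_add (hP : IsPrincipal (· ♯ ·) P) (c : Ordinal.{u}) (hr : r < P) :
    P * c ♯ r = P * c + r := by
  have hP0 : P ≠ 0 := (pos_of_gt hr).ne'
  induction c using WellFoundedLT.induction generalizing r with
  | _ c ihc =>
  induction r using WellFoundedLT.induction with
  | _ r ihr =>
  refine le_antisymm ?_ (add_le_nadd _ _)
  rw [nadd_le_iff]
  refine ⟨fun x hx => ?_, fun r' hr' => ?_⟩
  · have hq : x / P < c := (lt_mul_iff_div_lt hP0).1 hx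
    have hρ : x % P ♯ r < P := hP (mod_lt x hP0) hr
    calc x ♯ r ≤ P * (x / P) ♯ x % P ♯ r := nadd_le_nadd_right (le_mul_div_nadd_mod x P) r
      _ = P * (x / P) + (x % P ♯ r) := by rw [nadd_assoc, ihc _ hq hρ]
      _ < P * succ (x / P) := by rw [mul_succ]; exact add_lt_add_right hρ _
      _ ≤ P * c + r := (mul_le_mul_right (succ_le_of_lt hq) _).trans le_self_add
  · rw [ihr r' hr' (hr'.trans hr)]
    exact add_lt_add_right hr' _

theorem mul_nadd_lt_mul_succ (hP : IsPrincipal (· ♯ ·) P) (c : Ordinal.{u}) (hr : r < P) :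
    P * c ♯ r < P * succ c := by
  rw [mul_nadd_eq_mul_add hP c hr, mul_succ]
  exact add_lt_add_right hr _

theorem mul_nadd_mul_le (hP : IsPrincipal (· ♯ ·) P) (c d : Ordinal.{u}) :
    P * c ♯ P * d ≤ P * (c ♯ d) := by
  rcases eq_or_ne P 0 with rfl | hP0
  · simp
  have half : ∀ c d, (∀ q < c, P * q ♯ P * d ≤ P * (q ♯ d)) →
      ∀ x < P * c, x ♯ P * d < P * (c ♯ d) := by
    intro c d ih x hx
    have hq : x / P < c := (lt_mul_iff_div_lt hP0).1 hx
    calc x ♯ P * d ≤ P * (x / P) ♯ x % P ♯ P * d := nadd_le_nadd_right (le_mul_div_nadd_mod x P) _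
      _ = P * (x / P) ♯ P * d ♯ x % P := by ac_rfl
      _ ≤ P * (x / P ♯ d) ♯ x % P := nadd_le_nadd_right (ih _ hq) _
      _ < P * succ (x / P ♯ d) := mul_nadd_lt_mul_succ hP _ (mod_lt x hP0)
      _ ≤ P * (c ♯ d) := mul_le_mul_right (succ_le_of_lt (nadd_lt_nadd_right hq d)) _
  induction c using WellFoundedLT.induction generalizing d with
  | _ c ihc =>
  induction d using WellFoundedLT.induction with
  | _ d ihd =>
  rw [nadd_le_iff]
  refine ⟨half c d fun q hq => ihc q hq d, fun y hy => ?_⟩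
  rw [nadd_comm, nadd_comm c]
  exact half d c (fun q hq => by rw [nadd_comm, nadd_comm q]; exact ihd q hq) y hy

theorem nadd_lt_mul_succ_nadd (hP : IsPrincipal (· ♯ ·) P) (hr : r < P * succ c)
    (hs : s < P * succ d) : r ♯ s < P * succ (c ♯ d) := by
  have hP0 : P ≠ 0 := by
    rintro rfl
    simp at hr
  have hρ : r % P ♯ s % P < P := hP (mod_lt r hP0) (mod_lt s hP0)
  have hqc : r / P ≤ c := lt_succ_iff.1 ((lt_mul_iff_div_lt hP0).1 hr)
  have hqd : s / P ≤ d := lt_succ_iff.1 ((lt_mul_iff_div_lt hP0).1 hs)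
  calc r ♯ s ≤ (P * (r / P) ♯ r % P) ♯ (P * (s / P) ♯ s % P) :=
        nadd_le_nadd (le_mul_div_nadd_mod r P) (le_mul_div_nadd_mod s P)
    _ = P * (r / P) ♯ P * (s / P) ♯ (r % P ♯ s % P) := by ac_rfl
    _ ≤ P * (r / P ♯ s / P) ♯ (r % P ♯ s % P) := nadd_le_nadd_right (mul_nadd_mul_le hP _ _) _
    _ < P * succ (r / P ♯ s / P) := mul_nadd_lt_mul_succ hP _ hρ
    _ ≤ P * succ (c ♯ d) := mul_le_mul_right (succ_le_succ (nadd_le_nadd hqc hqd)) _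

theorem nadd_lt_mul_of_lt_mul (hP : IsPrincipal (· ♯ ·) P) (ha : a < P * c) (hb : b < P) :
    a ♯ b < P * c := by
  have hP0 : P ≠ 0 := (pos_of_gt hb).ne'
  calc a ♯ b < P * succ (a / P ♯ 0) :=
        nadd_lt_mul_succ_nadd hP (by simpa using lt_mul_succ_div a hP0) (by simpa using hb)
    _ ≤ P * c := by
        rw [nadd_zero]
        exact mul_le_mul_right (succ_le_of_lt ((lt_mul_iff_div_lt hP0).1 ha)) _

theorem isPrincipal_nadd_omega0_opow (k : Ordinal.{u}) : IsPrincipal (· ♯ ·) (ω ^ k) := by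
  induction k using WellFoundedLT.induction with
  | _ k ih =>
  intro r s hr hs
  rcases eq_or_ne k 0 with rfl | hk
  · rw [opow_zero, lt_one_iff] at hr hs
    simp [hr, hs]
  obtain ⟨i, hi, m, hm⟩ := (lt_omega0_opow hk).1 hr
  obtain ⟨j, hj, n, hn⟩ := (lt_omega0_opow hk).1 hs
  have hij : max i j < k := max_lt hi hj
  have hr' : r < ω ^ max i j * succ (m : Ordinal) :=
    hm.trans_le (mul_le_mul' (opow_le_opow_right omega0_pos (le_max_left i j)) (le_succ _))
  have hs' : s < ω ^ max i j * succ (n : Ordinal) :=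
    hn.trans_le (mul_le_mul' (opow_le_opow_right omega0_pos (le_max_right i j)) (le_succ _))
  calc r ♯ s < ω ^ max i j * succ ((m : Ordinal) ♯ n) := nadd_lt_mul_succ_nadd (ih _ hij) hr' hs'
    _ = ω ^ max i j * (m + n + 1 : ℕ) := by rw [nadd_natCast, succ_eq_add_one]; push_cast; rfl
    _ < ω ^ k := opow_mul_lt_opow (natCast_lt_omega0 _) hij

theorem omega0_opow_nmul_omega0_opow_le (a b : Ordinal.{u}) : ω ^ a ⨳ ω ^ b ≤ ω ^ (a ♯ b) := by
  have half : ∀ a b x : Ordinal.{u}, (∀ c < a, ω ^ c ⨳ ω ^ b ≤ ω ^ (c ♯ b)) → x < ω ^ a →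
      x ⨳ ω ^ b < ω ^ (a ♯ b) := by
    intro a b x ih hx
    rcases eq_or_ne a 0 with rfl | ha
    · rw [opow_zero, lt_one_iff] at hx
      simpa [hx] using opow_pos (0 ♯ b) omega0_pos
    obtain ⟨c, hc, n, hn⟩ := (lt_omega0_opow ha).1 hx
    calc x ⨳ ω ^ b ≤ ω ^ c ⨳ n ⨳ ω ^ b := nmul_le_nmul_right (hn.le.trans (mul_le_nmul _ _)) _
      _ = ω ^ c ⨳ ω ^ b ⨳ n := nmul_right_comm_natCast _ _ _
      _ ≤ ω ^ (c ♯ b) ⨳ n := nmul_le_nmul_right (ih c hc) _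
      _ < ω ^ (a ♯ b) := (isPrincipal_nadd_omega0_opow _).nmul_natCast_lt
          ((opow_lt_opow_iff_right one_lt_omega0).2 (nadd_lt_nadd_right hc b)) n
  induction a using WellFoundedLT.induction generalizing b with
  | _ a iha =>
  induction b using WellFoundedLT.induction with
  | _ b ihb =>
  rw [nmul_le_iff]
  intro x hx y hy
  have hxb := half a b x (fun c hc => iha c hc b) hx
  have hay : ω ^ a ⨳ y < ω ^ (a ♯ b) := by
    rw [nmul_comm, nadd_comm]
    exact half b a y (fun c hc => by rw [nmul_comm, nadd_comm]; exact ihb c hc) hy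
  exact (isPrincipal_nadd_omega0_opow _ hxb hay).trans_le le_self_nadd

theorem nmul_lt_omega0_opow_succ (hx : x < ω ^ succ a) (hy : y < ω ^ succ b) :
    x ⨳ y < ω ^ succ (a ♯ b) := by
  obtain ⟨m, hm⟩ := lt_omega0_opow_succ.1 hx
  obtain ⟨n, hn⟩ := lt_omega0_opow_succ.1 hy
  have hP := isPrincipal_nadd_omega0_opow (succ (a ♯ b))
  have hlt : ω ^ (a ♯ b) < ω ^ succ (a ♯ b) :=
    (opow_lt_opow_iff_right one_lt_omega0).2 (lt_succ _)
  calc x ⨳ y ≤ ω ^ a ⨳ m ⨳ (ω ^ b ⨳ n) :=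
        nmul_le_nmul (hm.le.trans (mul_le_nmul _ _)) (hn.le.trans (mul_le_nmul _ _))
    _ = ω ^ a ⨳ ω ^ b ⨳ n ⨳ m := by
        rw [nmul_right_comm_natCast, nmul_comm (ω ^ a), nmul_right_comm_natCast,
          nmul_comm (ω ^ b)]
    _ ≤ ω ^ (a ♯ b) ⨳ n ⨳ m :=
        nmul_le_nmul_right (nmul_le_nmul_right (omega0_opow_nmul_omega0_opow_le a b) _) _
    _ < ω ^ succ (a ♯ b) := hP.nmul_natCast_lt (hP.nmul_natCast_lt hlt n) m

theorem exists_opow_omega0_eq (hα : 1 < α) :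
    ∃ k : Ordinal, log ω α < ω ^ k ∧ α ^ ω = ω ^ ω ^ k := by
  rcases lt_or_ge α ω with hfin | hinf
  · refine ⟨0, ?_, ?_⟩
    · rw [log_eq_zero hfin, opow_zero]
      exact zero_lt_one
    · rw [opow_omega0 hα hfin, opow_zero, opow_one]
  have hαd : α < ω ^ succ (log ω α) := lt_opow_succ_log_self one_lt_omega0 α
  have hdα : ω ^ log ω α ≤ α := opow_log_le_self ω (zero_lt_one.trans hα).ne'
  generalize log ω α = d at hαd hdα ⊢
  have hd : d ≠ 0 := by
    rintro rfl
    rw [succ_eq_add_one, zero_add, opow_one] at hαd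
    exact hαd.not_ge hinf
  have hdω : d * ω = ω ^ succ (log ω d) :=
    mul_eq_opow_log_succ hd isPrincipal_mul_omega0 (natCast_lt_omega0 2)
  refine ⟨succ (log ω d), lt_opow_succ_log_self one_lt_omega0 d, le_antisymm ?_ ?_⟩
  · have hsucc : succ d ≤ d * 2 := by
      rw [← one_add_one_eq_two, mul_add, mul_one, succ_eq_add_one]
      exact add_le_add_right (one_le_iff_ne_zero.2 hd) d
    calc α ^ ω ≤ (ω ^ succ d) ^ ω := opow_le_opow_left _ hαd.le
      _ = ω ^ (succ d * ω) := (opow_mul _ _ _).symm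
      _ ≤ ω ^ (d * 2 * ω) := opow_le_opow_right omega0_pos (mul_le_mul_left hsucc ω)
      _ = ω ^ ω ^ succ (log ω d) := by
          rw [mul_assoc, ← Nat.cast_two, natCast_mul_omega0 two_pos, hdω]
  · calc ω ^ ω ^ succ (log ω d) = (ω ^ d) ^ ω := by rw [← hdω, opow_mul]
      _ ≤ α ^ ω := opow_le_opow_left _ hdα

theorem exists_opow_eq_omega0_opow_mul (hα : 1 < α) (hl : IsSuccLimit l) :
    ∃ k Q : Ordinal, log ω α < ω ^ k ∧ Q ≠ 0 ∧ α ^ l = ω ^ (ω ^ k * Q) := by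
  obtain ⟨k, hk, hαω⟩ := exists_opow_omega0_eq hα
  obtain ⟨Q, rfl⟩ := isSuccPrelimit_iff_omega0_dvd.1 hl.isSuccPrelimit
  exact ⟨k, Q, hk, right_ne_zero_of_mul hl.pos.ne', by rw [opow_mul, hαω, ← opow_mul]⟩

theorem nmul_lt_opow_of_isSuccLimit (hα : 1 < α) (hl : IsSuccLimit l) (hx : x < α ^ l) :
    x ⨳ α < α ^ l := by
  obtain ⟨k, Q, hk, hQ, he⟩ := exists_opow_eq_omega0_opow_mul hα hl
  rw [he] at hx ⊢
  obtain ⟨a, ha, n, hn⟩ := (lt_omega0_opow (mul_ne_zero (opow_ne_zero _ omega0_ne_zero) hQ)).1 hx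
  calc x ⨳ α < ω ^ succ (a ♯ log ω α) :=
        nmul_lt_omega0_opow_succ (lt_omega0_opow_succ.2 ⟨n, hn⟩)
          (lt_opow_succ_log_self one_lt_omega0 α)
    _ ≤ ω ^ (ω ^ k * Q) := opow_le_opow_right omega0_pos
        (succ_le_of_lt (nadd_lt_mul_of_lt_mul (isPrincipal_nadd_omega0_opow k) ha hk))

end Ordinal

open Ordinal

universe v

theorem iterNmul_zero (α : Ordinal.{u}) : iterNmul α (0 : Ordinal.{v}) = 1 :=
  limitRecOn_zero _ _ _

theorem iterNmul_add_one (α : Ordinal.{u}) (β : Ordinal.{v}) :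
    iterNmul α (β + 1) = iterNmul α β ⨳ α :=
  limitRecOn_add_one _ _ _ _

theorem iterNmul_limit (α : Ordinal.{u}) {l : Ordinal.{v}} (hl : IsSuccLimit l) :
    iterNmul α l = ⨆ γ : Set.Iio l, iterNmul α γ.1 := by
  rw [iterNmul, limitRecOn_limit _ _ _ _ hl]
  rfl

theorem one_iterNmul (β : Ordinal.{v}) : iterNmul (1 : Ordinal.{u}) β = 1 := by
  induction β using limitRecOn with
  | zero => exact iterNmul_zero 1
  | add_one β ih => rw [iterNmul_add_one, ih, nmul_one]
  | limit β hβ ih =>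
    rw [iterNmul_limit 1 hβ]
    have : Nonempty (Set.Iio β) := ⟨⟨0, hβ.pos⟩⟩
    exact (iSup_congr fun γ : Set.Iio β => ih γ.1 γ.2).trans ciSup_const

theorem opow_le_iterNmul {α : Ordinal.{u}} (hα : α ≠ 0) (β : Ordinal.{u}) :
    α ^ β ≤ iterNmul α β := by
  induction β using limitRecOn with
  | zero => rw [iterNmul_zero, opow_zero]
  | add_one β ih =>
    rw [iterNmul_add_one, opow_add_one]
    exact (mul_le_mul_left ih α).trans (mul_le_nmul _ _)
  | limit β hβ ih =>
    rw [iterNmul_limit α hβ, opow_le_of_isSuccLimit hα hβ]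
    exact fun γ hγ =>
      (ih γ hγ).trans (Ordinal.le_iSup (fun γ : Set.Iio β => iterNmul α γ.1) ⟨γ, hγ⟩)

theorem iterNmul_lt_opow {α β l : Ordinal.{u}} (hα : 1 < α) (hl : IsSuccLimit l) (hβ : β < l) :
    iterNmul α β < α ^ l := by
  induction β using limitRecOn generalizing l with
  | zero =>
    rw [iterNmul_zero, ← opow_zero α]
    exact (opow_lt_opow_iff_right hα).2 hl.pos
  | add_one β ih =>
    rw [iterNmul_add_one]
    exact nmul_lt_opow_of_isSuccLimit hα hl (ih hl ((lt_add_one β).trans hβ))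
  | limit β hβl ih =>
    rw [iterNmul_limit α hβl]
    refine (Ordinal.iSup_le fun γ : Set.Iio β => (ih γ.1 γ.2 hβl γ.2).le).trans_lt ?_
    exact (opow_lt_opow_iff_right hα).2 hβ

theorem iterNmul_eq_opow_of_isSuccLimit {α l : Ordinal.{u}} (hα : 1 < α) (hl : IsSuccLimit l) :
    iterNmul α l = α ^ l := by
  refine le_antisymm ?_ (opow_le_iterNmul (zero_lt_one.trans hα).ne' l)
  rw [iterNmul_limit α hl]
  exact Ordinal.iSup_le fun γ : Set.Iio l => (iterNmul_lt_opow hα hl γ.2).le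

/-- Let `α ≥ 1` be an ordinal and `λ` a limit ordinal. Then `α^{⊙λ} = α^λ`,
and moreover `α^λ` is additively closed. -/
theorem iterNmul_limit_eq_opow_and_additively_closed
    (α : Ordinal) (hα : 1 ≤ α) (l : Ordinal) (hl : Order.IsSuccLimit l) :
    iterNmul α l = α ^ l ∧ ∀ γ δ : Ordinal, γ < α ^ l → δ < α ^ l → γ + δ < α ^ l := by
  rcases hα.eq_or_lt with rfl | hα
  · rw [one_iterNmul, one_opow]
    exact ⟨rfl, fun γ δ hγ hδ => isPrincipal_add_one hγ hδ⟩
  · obtain ⟨k, Q, -, -, he⟩ := exists_opow_eq_omega0_opow_mul hα hl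
    refine ⟨iterNmul_eq_opow_of_isSuccLimit hα hl, ?_⟩
    rw [he]
    exact fun γ δ hγ hδ => isPrincipal_add_omega0_opow _ hγ hδ
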